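/- arXiv:2501.04842 — 2 statements merged into one kernel-verified Lean document; each statement's English description precedes it below -/
import Mathlib

section
/- Let f(x) = λᵀx with λ ∈ ℝˢ having exactly s₀ ≥ 1 nonzero entries, and let R ⊆ [0,1]ˢ be a rectangle with side lengths μ₁,…,μ_s all positive (so Δ(R) > 0). Then for each j ∈ {1,…,s}: (Δ(R[j]⁺) + Δ(R[j]⁻))/(2Δ(R)) = 1 − 3μⱼ²λⱼ²/(4∑ᵢ μᵢ²λᵢ²). Consequently, for any j* minimising j ↦ Δ(R[j]⁺) + Δ(R[j]⁻) over j ∈ {1,…,s}: (Δ(R[j*]⁺) + Δ(R[j*]⁻))/(2Δ(R)) ≤ 1 − 3/(4s₀). -/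
/-!
Under the uniform law on a box `[a, b]` the coordinates are independent and uniform on the
sides, so `Δ([a, b]) = S / 12` with `S = ∑ᵢ μᵢ²λᵢ²`. Halving side `j` divides its term
by four, so both halves have variance `(S - ¾ μⱼ²λⱼ²) / 12`, which gives the identity.
A minimiser `j*` maximises `μⱼ²λⱼ²`, and since only `s₀` of these terms are nonzero,
`S ≤ s₀ μ_{j*}²λ_{j*}²`, which is the bound.
-/

open MeasureTheory ProbabilityTheory

noncomputable section

/-- The unit hypercube `[0,1]^s`. -/
def unitCube (s : ℕ) : Set (Fin s → ℝ) := Set.Icc 0 1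

/-- The uniform distribution on a subset `R` of `ℝ^s` (Lebesgue measure conditioned on `R`). -/
def unif {s : ℕ} (R : Set (Fin s → ℝ)) : Measure (Fin s → ℝ) :=
  (volume : Measure (Fin s → ℝ))[|R]

/-- `Δ(R)`: variance of `f` under the uniform distribution on `R`. -/
def strataVar {s : ℕ} (f : (Fin s → ℝ) → ℝ) (R : Set (Fin s → ℝ)) : ℝ :=
  variance f (unif R)

/-- `R[j]⁻`: lower half of the rectangle `Icc a b` split at the midpoint of its `j`-th side. -/
def lowerHalf {s : ℕ} (a b : Fin s → ℝ) (j : Fin s) : Set (Fin s → ℝ) :=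
  Set.Icc a (Function.update b j ((a j + b j) / 2))

/-- `R[j]⁺`: upper half of the rectangle `Icc a b` split at the midpoint of its `j`-th side. -/
def upperHalf {s : ℕ} (a b : Fin s → ℝ) (j : Fin s) : Set (Fin s → ℝ) :=
  Set.Icc (Function.update a j ((a j + b j) / 2)) b

/-- Law of `N` i.i.d. points uniform on `[0,1]^s`. -/
def mcMeasure (s N : ℕ) : Measure (Fin N → (Fin s → ℝ)) :=
  Measure.pi fun _ => unif (unitCube s)

/-- The standard Monte Carlo estimator of `∫_{[0,1]^s} f` based on `N` points. -/
def mcEst {s : ℕ} (N : ℕ) (f : (Fin s → ℝ) → ℝ) : (Fin N → (Fin s → ℝ)) → ℝ :=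
  fun ω => (∑ n, f (ω n)) / N

open Set Function

lemma isProbabilityMeasure_cond_Icc {a b : ℝ} (hab : a < b) :
    IsProbabilityMeasure ((volume : Measure ℝ)[|Icc a b]) :=
  cond_isProbabilityMeasure_of_finite (by simp [hab]) (by simp)

lemma integral_cond_Icc {a b : ℝ} (hab : a < b) (g : ℝ → ℝ) :
    ∫ t, g t ∂(volume : Measure ℝ)[|Icc a b] = (b - a)⁻¹ * ∫ t in a..b, g t := by
  rw [ProbabilityTheory.cond, integral_smul_measure, intervalIntegral.integral_of_le hab.le,
    ← integral_Icc_eq_integral_Ioc, Real.volume_Icc, ENNReal.toReal_inv,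
    ENNReal.toReal_ofReal (sub_nonneg.2 hab.le), smul_eq_mul]

lemma memLp_id_cond_Icc (a b : ℝ) : MemLp id 2 ((volume : Measure ℝ)[|Icc a b]) := by
  refine MemLp.of_bound measurable_id.aestronglyMeasurable (max |a| |b|) ?_
  filter_upwards [ae_cond_mem measurableSet_Icc] with t ht
  exact abs_le_max_abs_abs ht.1 ht.2

lemma variance_id_cond_Icc {a b : ℝ} (hab : a < b) :
    Var[id; (volume : Measure ℝ)[|Icc a b]] = (b - a) ^ 2 / 12 := by
  have hne : b - a ≠ 0 := sub_ne_zero.2 hab.ne'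
  have hmean : ∫ t, id t ∂(volume : Measure ℝ)[|Icc a b] = (a + b) / 2 := by
    rw [integral_cond_Icc hab]
    simp only [id_eq]
    rw [integral_id]
    field_simp
    ring
  rw [variance_eq_integral measurable_id.aemeasurable, hmean, integral_cond_Icc hab]
  simp only [id]
  rw [intervalIntegral.integral_comp_sub_right (fun t => t ^ 2), integral_pow]
  field_simp
  ring

lemma cond_Icc_eq_pi {ι : Type*} [Fintype ι] {a b : ι → ℝ} (hab : ∀ i, a i < b i) :
    (volume : Measure (ι → ℝ))[|Icc a b] =
      Measure.pi fun i => (volume : Measure ℝ)[|Icc (a i) (b i)] := by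
  have := fun i => isProbabilityMeasure_cond_Icc (hab i)
  refine (Measure.pi_eq fun t _ => ?_).symm
  have hbox : Icc a b ∩ univ.pi t = univ.pi fun i => Icc (a i) (b i) ∩ t i := by
    rw [pi_inter_distrib, pi_univ_Icc]
  simp only [cond_apply measurableSet_Icc, hbox, Real.volume_Icc_pi, volume_pi_pi,
    Real.volume_Icc, Finset.prod_mul_distrib,
    ENNReal.prod_inv_distrib fun i _ j _ _ => Or.inr ENNReal.ofReal_ne_top]

lemma variance_linear_cond_Icc {ι : Type*} [Fintype ι] (lam : ι → ℝ) {a b : ι → ℝ}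
    (hab : ∀ i, a i < b i) :
    Var[fun x => ∑ i, lam i * x i; (volume : Measure (ι → ℝ))[|Icc a b]] =
      ∑ i, (b i - a i) ^ 2 * lam i ^ 2 / 12 := by
  have := fun i => isProbabilityMeasure_cond_Icc (hab i)
  have hsum : (fun x : ι → ℝ => ∑ i, lam i * x i) = ∑ i, fun x => lam i * x i := by
    ext x; simp
  rw [cond_Icc_eq_pi hab, hsum,
    variance_sum_pi (X := fun i t => lam i * t) fun i => (memLp_id_cond_Icc _ _).const_mul _]
  refine Finset.sum_congr rfl fun i _ => ?_
  erw [variance_const_mul (lam i) id, variance_id_cond_Icc (hab i)]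
  ring

lemma Fintype.sum_apply_update {ι M : Type*} [Fintype ι] [DecidableEq ι] [AddCommGroup M]
    (F : ι → ℝ → M) (x : ι → ℝ) (j : ι) (y : ℝ) :
    ∑ i, F i (update x j y i) = ∑ i, F i (x i) - F j (x j) + F j y := by
  rw [← Finset.add_sum_erase _ _ (Finset.mem_univ j),
    ← Finset.add_sum_erase _ _ (Finset.mem_univ j), update_self,
    Finset.sum_congr rfl fun i hi => by rw [update_of_ne (Finset.ne_of_mem_erase hi)]]
  abel

section Halves

variable {s : ℕ} (lam : Fin s → ℝ) {a b : Fin s → ℝ}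

lemma strataVar_linear_Icc (hab : ∀ i, a i < b i) :
    strataVar (fun x => ∑ i, lam i * x i) (Icc a b) =
      (∑ i, (b i - a i) ^ 2 * lam i ^ 2) / 12 := by
  rw [strataVar, unif, variance_linear_cond_Icc lam hab, Finset.sum_div]

lemma strataVar_lowerHalf_linear (hab : ∀ i, a i < b i) (j : Fin s) :
    strataVar (fun x => ∑ i, lam i * x i) (lowerHalf a b j) =
      (∑ i, (b i - a i) ^ 2 * lam i ^ 2 - 3 / 4 * ((b j - a j) ^ 2 * lam j ^ 2)) / 12 := by
  have hlt : ∀ i, a i < update b j ((a j + b j) / 2) i := by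
    intro i
    rcases eq_or_ne i j with rfl | hij
    · rw [update_self]; linarith [hab i]
    · rw [update_of_ne hij]; exact hab i
  rw [lowerHalf, strataVar_linear_Icc lam hlt,
    Fintype.sum_apply_update (fun i t => (t - a i) ^ 2 * lam i ^ 2)]
  ring

lemma strataVar_upperHalf_linear (hab : ∀ i, a i < b i) (j : Fin s) :
    strataVar (fun x => ∑ i, lam i * x i) (upperHalf a b j) =
      (∑ i, (b i - a i) ^ 2 * lam i ^ 2 - 3 / 4 * ((b j - a j) ^ 2 * lam j ^ 2)) / 12 := by
  have hlt : ∀ i, update a j ((a j + b j) / 2) i < b i := by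
    intro i
    rcases eq_or_ne i j with rfl | hij
    · rw [update_self]; linarith [hab i]
    · rw [update_of_ne hij]; exact hab i
  rw [upperHalf, strataVar_linear_Icc lam hlt,
    Fintype.sum_apply_update (fun i t => (b i - t) ^ 2 * lam i ^ 2)]
  ring

end Halves

lemma Fintype.sum_le_card_subtype_mul {ι : Type*} [Fintype ι] (p : ι → Prop) [DecidablePred p]
    {t : ι → ℝ} {M : ℝ} (hzero : ∀ i, ¬ p i → t i = 0) (hle : ∀ i, t i ≤ M) :
    ∑ i, t i ≤ Fintype.card {i // p i} * M := by
  rw [Fintype.card_subtype, ← nsmul_eq_mul,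
    ← Finset.sum_filter_of_ne fun i _ hi => not_not.1 (mt (hzero i) hi)]
  exact Finset.sum_le_card_nsmul _ _ _ fun i _ => hle i

theorem linear_variance_reduction_general {s : ℕ} (lam : Fin s → ℝ) (s0 : ℕ) (hs0 : 1 ≤ s0)
    (hcard : Fintype.card {i : Fin s // lam i ≠ 0} = s0)
    (a b : Fin s → ℝ) (hab : ∀ i, a i < b i)
    (f : (Fin s → ℝ) → ℝ) (hf : ∀ x, f x = ∑ i, lam i * x i) :
    (∀ j : Fin s,
      (strataVar f (upperHalf a b j) + strataVar f (lowerHalf a b j)) /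
          (2 * strataVar f (Set.Icc a b)) =
        1 - 3 * (b j - a j) ^ 2 * lam j ^ 2 / (4 * ∑ i, (b i - a i) ^ 2 * lam i ^ 2)) ∧
      ∀ jstar : Fin s,
        (∀ j : Fin s,
          strataVar f (upperHalf a b jstar) + strataVar f (lowerHalf a b jstar) ≤
            strataVar f (upperHalf a b j) + strataVar f (lowerHalf a b j)) →
        (strataVar f (upperHalf a b jstar) + strataVar f (lowerHalf a b jstar)) /
            (2 * strataVar f (Set.Icc a b)) ≤ 1 - 3 / (4 * (s0 : ℝ)) := by
  have hf' : f = fun x => ∑ i, lam i * x i := funext hf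
  set t : Fin s → ℝ := fun i => (b i - a i) ^ 2 * lam i ^ 2 with ht
  have hvar : strataVar f (Icc a b) = (∑ i, t i) / 12 := hf' ▸ strataVar_linear_Icc lam hab
  have hsplit : ∀ j, strataVar f (upperHalf a b j) + strataVar f (lowerHalf a b j) =
      (∑ i, t i) / 6 - t j / 8 := by
    intro j
    rw [hf', strataVar_upperHalf_linear lam hab, strataVar_lowerHalf_linear lam hab]
    ring
  have hS : 0 < ∑ i, t i := by
    have hpos : 0 < Fintype.card {i // lam i ≠ 0} := hcard ▸ hs0
    obtain ⟨⟨i, hi⟩⟩ := Fintype.card_pos_iff.1 hpos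
    exact Finset.sum_pos' (fun i _ => by positivity)
      ⟨i, Finset.mem_univ i, by have := sub_pos.2 (hab i); positivity⟩
  have hratio : ∀ j, (strataVar f (upperHalf a b j) + strataVar f (lowerHalf a b j)) /
      (2 * strataVar f (Icc a b)) = 1 - 3 * t j / (4 * ∑ i, t i) := by
    intro j
    rw [hsplit, hvar]
    field_simp
    ring
  refine ⟨fun j => by simpa only [ht, mul_assoc] using hratio j, fun jstar hmin => ?_⟩
  have hmax : ∀ j, t j ≤ t jstar := fun j => by linarith [hsplit j, hsplit jstar, hmin j]
  have hS_le : ∑ i, t i ≤ s0 * t jstar :=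
    hcard ▸ Fintype.sum_le_card_subtype_mul _ (fun i hi => by simp [t, not_not.1 hi]) hmax
  have hs0_pos : (0 : ℝ) < s0 := by exact_mod_cast hs0
  have h_term : 3 / (4 * (s0 : ℝ)) ≤ 3 * t jstar / (4 * ∑ i, t i) := by
    rw [div_le_div_iff₀ (by positivity) (by positivity)]
    nlinarith
  rw [hratio]
  linarith

/-- for `f(x) = λᵀx` with exactly `s₀ ≥ 1` nonzero entries and a rectangle
`R = [a,b]` with positive side lengths `μᵢ = bᵢ − aᵢ`, for each `j` the variance
reduction factor of the midpoint split along `j` is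
`(Δ(R[j]⁺) + Δ(R[j]⁻))/(2Δ(R)) = 1 − 3μⱼ²λⱼ²/(4∑ᵢ μᵢ²λᵢ²)`; consequently for any
minimiser `j*` of `j ↦ Δ(R[j]⁺) + Δ(R[j]⁻)` this factor is at most `1 − 3/(4s₀)`. -/
theorem linear_variance_reduction {s : ℕ} (lam : Fin s → ℝ) (s0 : ℕ) (hs0 : 1 ≤ s0)
    (hcard : Fintype.card {i : Fin s // lam i ≠ 0} = s0)
    (a b : Fin s → ℝ) (hab : ∀ i, a i < b i)
    (hsub : Set.Icc a b ⊆ unitCube s)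
    (f : (Fin s → ℝ) → ℝ) (hf : ∀ x, f x = ∑ i, lam i * x i) :
    (∀ j : Fin s,
      (strataVar f (upperHalf a b j) + strataVar f (lowerHalf a b j)) /
          (2 * strataVar f (Set.Icc a b)) =
        1 - 3 * (b j - a j) ^ 2 * lam j ^ 2 / (4 * ∑ i, (b i - a i) ^ 2 * lam i ^ 2)) ∧
      ∀ jstar : Fin s,
        (∀ j : Fin s,
          strataVar f (upperHalf a b jstar) + strataVar f (lowerHalf a b jstar) ≤
            strataVar f (upperHalf a b j) + strataVar f (lowerHalf a b j)) →
        (strataVar f (upperHalf a b jstar) + strataVar f (lowerHalf a b jstar)) /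
            (2 * strataVar f (Set.Icc a b)) ≤ 1 - 3 / (4 * (s0 : ℝ)) :=
  linear_variance_reduction_general lam s0 hs0 hcard a b hab f hf
end
end

section
/- Let f : [0,1]ˢ → ℝ be strictly increasing in each coordinate and satisfy |f(x) − f(y)| ≥ (∑ᵢ αᵢ²(xᵢ − yᵢ)²)^{1/2} for all x, y ∈ [0,1]ˢ, where αᵢ > 0. Let R ⊆ [0,1]ˢ be a rectangle with side lengths μ₁,…,μ_s and let j ∈ {1,…,s}. Then E[f(X) | X ∈ R[j]⁺] − E[f(X) | X ∈ R[j]⁻] ≥ αⱼμⱼ/2, where X is uniform on R. -/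
open MeasureTheory ProbabilityTheory

noncomputable section

/-!
Translation by `h • eⱼ`, with `h = (b j - a j) / 2`, preserves Lebesgue measure and maps `R[j]⁻`
onto `R[j]⁺`, so the mean gap is the `R[j]⁻`-mean of `f (x + h • eⱼ) - f x`. By monotonicity this
difference is nonnegative, so it equals its absolute value, which the lower Lipschitz bound makes
at least `αⱼ h`. Monotonicity also bounds `f` on `R` between `f a` and `f b`, which gives
integrability.
-/

open Function Set

theorem monotoneOn_Icc_of_update {ι α β : Type*} [Fintype ι] [DecidableEq ι] [Preorder α]
    [Preorder β] {p q : ι → α} {f : (ι → α) → β}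
    (hf : ∀ x ∈ Icc p q, ∀ i t u, p i ≤ t → t ≤ u → u ≤ q i →
      f (update x i t) ≤ f (update x i u)) :
    MonotoneOn f (Icc p q) := by
  classical
  intro x hx y hy hxy
  have key : ∀ T : Finset ι, f x ≤ f (T.piecewise y x) := by
    intro T
    induction T using Finset.induction_on with
    | empty => simp
    | insert i T hi ih =>
      set z := T.piecewise y x
      have hz : z ∈ Icc p q := ⟨fun k ↦ T.piecewise_cases y x (p k ≤ ·) (hy.1 k) (hx.1 k),
        fun k ↦ T.piecewise_cases y x (· ≤ q k) (hy.2 k) (hx.2 k)⟩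
      have hzi : z i = x i := T.piecewise_eq_of_notMem _ _ hi
      rw [Finset.piecewise_insert]
      calc f x ≤ f z := ih
        _ = f (update z i (z i)) := by rw [update_eq_self]
        _ ≤ f (update z i (y i)) := hf z hz i _ _ (hz.1 i) (hzi ▸ hxy i) (hy.2 i)
  simpa using key Finset.univ

theorem monotoneOn_unitCube_of_update {s : ℕ} {f : (Fin s → ℝ) → ℝ}
    (hmono : ∀ x ∈ unitCube s, ∀ (j : Fin s) (t u : ℝ), 0 ≤ t → t < u → u ≤ 1 →
      f (Function.update x j t) < f (Function.update x j u)) :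
    MonotoneOn f (unitCube s) :=
  monotoneOn_Icc_of_update fun x hx i t u ht htu hu ↦ htu.eq_or_lt.elim
    (fun h ↦ h ▸ le_rfl) (fun h ↦ (hmono x hx i t u ht h hu).le)

theorem MonotoneOn.integrable_cond {α : Type*} [MeasurableSpace α] [Preorder α] {μ : Measure α}
    {f : α → ℝ} {a b : α} {s : Set α} (hf : MonotoneOn f (Icc a b))
    (hfm : AEStronglyMeasurable f μ[|s]) (hs : MeasurableSet s) (hsub : s ⊆ Icc a b) :
    Integrable f μ[|s] :=
  Integrable.of_bound hfm (max |f a| |f b|) <| ae_cond_of_forall_mem hs fun x hx ↦ by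
    have hx := hsub hx
    have hab : a ≤ b := hx.1.trans hx.2
    exact abs_le_max_abs_abs (hf (left_mem_Icc.2 hab) hx hx.1) (hf hx (right_mem_Icc.2 hab) hx.2)

theorem map_add_right_cond_preimage {G : Type*} [MeasurableSpace G] [AddGroup G] [MeasurableAdd G]
    (μ : Measure G) [μ.IsAddRightInvariant] (v : G) (U : Set G) :
    (μ[|(· + v) ⁻¹' U]).map (· + v) = μ[|U] := by
  rw [ProbabilityTheory.cond, ProbabilityTheory.cond, Measure.map_smul,
    ← (measurableEmbedding_addRight v).restrict_map, map_add_right_eq_self,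
    measure_preimage_add_right]

theorem isProbabilityMeasure_unif_Icc {s : ℕ} {p q : Fin s → ℝ} (hpq : ∀ i, p i < q i) :
    IsProbabilityMeasure (unif (Icc p q)) := by
  refine cond_isProbabilityMeasure_of_finite ?_ measure_Icc_lt_top.ne
  rw [Real.volume_Icc_pi, Finset.prod_ne_zero_iff]
  exact fun i _ ↦ (ENNReal.ofReal_pos.2 (sub_pos.2 (hpq i))).ne'

section Halves

variable {s : ℕ} (a b : Fin s → ℝ) (j : Fin s)

theorem lowerHalf_subset (h : a j ≤ b j) : lowerHalf a b j ⊆ Icc a b :=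
  Icc_subset_Icc le_rfl (update_le_iff.2 ⟨by linarith, fun _ _ ↦ le_rfl⟩)

theorem upperHalf_subset (h : a j ≤ b j) : upperHalf a b j ⊆ Icc a b :=
  Icc_subset_Icc (le_update_iff.2 ⟨by linarith, fun _ _ ↦ le_rfl⟩) le_rfl

theorem preimage_add_single_upperHalf :
    (· + Pi.single j ((b j - a j) / 2)) ⁻¹' upperHalf a b j = lowerHalf a b j := by
  ext x
  simp only [mem_preimage, upperHalf, lowerHalf, mem_Icc, Pi.le_def, Pi.add_apply]
  refine and_congr (forall_congr' fun i ↦ ?_) (forall_congr' fun i ↦ ?_) <;>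
    rcases eq_or_ne i j with rfl | hij <;> simp [*] <;> constructor <;> intro <;> linarith

theorem isProbabilityMeasure_unif_lowerHalf (hab : ∀ i, a i < b i) :
    IsProbabilityMeasure (unif (lowerHalf a b j)) :=
  isProbabilityMeasure_unif_Icc fun i ↦ by
    rcases eq_or_ne i j with rfl | hij <;> simp [*]; linarith [hab i]

end Halves

theorem mul_le_sub_of_add_single {s : ℕ} {f : (Fin s → ℝ) → ℝ} (hf : MonotoneOn f (unitCube s))
    {α : Fin s → ℝ} (hlow : ∀ x ∈ unitCube s, ∀ y ∈ unitCube s,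
      Real.sqrt (∑ i, α i ^ 2 * (x i - y i) ^ 2) ≤ |f x - f y|)
    {x : Fin s → ℝ} {j : Fin s} {c : ℝ} (hc : 0 ≤ c) (hx : x ∈ unitCube s)
    (hxc : x + (Pi.single j c : Fin s → ℝ) ∈ unitCube s) :
    α j * c ≤ f (x + Pi.single j c) - f x := by
  have hsum : ∑ i, α i ^ 2 * ((x + Pi.single j c : Fin s → ℝ) i - x i) ^ 2 = (α j * c) ^ 2 := by
    rw [Fintype.sum_eq_single j fun i hij ↦ by simp [hij]]
    simp [mul_pow]
  have hle : f x ≤ f (x + Pi.single j c) :=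
    hf hx hxc (le_add_of_nonneg_right (Pi.single_nonneg.2 hc))
  calc α j * c ≤ |α j * c| := le_abs_self _
    _ = √(∑ i, α i ^ 2 * ((x + Pi.single j c : Fin s → ℝ) i - x i) ^ 2) := by
      rw [hsum, Real.sqrt_sq_eq_abs]
    _ ≤ |f (x + Pi.single j c) - f x| := hlow _ hxc _ hx
    _ = f (x + Pi.single j c) - f x := abs_of_nonneg (sub_nonneg.2 hle)

theorem mean_gap_lower_bound_general {s : ℕ} (f : (Fin s → ℝ) → ℝ) (hf : Measurable f)
    (hmono : ∀ x ∈ unitCube s, ∀ (j : Fin s) (t u : ℝ), 0 ≤ t → t < u → u ≤ 1 →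
      f (Function.update x j t) < f (Function.update x j u))
    (α : Fin s → ℝ)
    (hlow : ∀ x ∈ unitCube s, ∀ y ∈ unitCube s,
      Real.sqrt (∑ i, α i ^ 2 * (x i - y i) ^ 2) ≤ |f x - f y|)
    (a b : Fin s → ℝ) (hab : ∀ i, a i < b i)
    (hsub : Set.Icc a b ⊆ unitCube s) (j : Fin s) :
    α j * (b j - a j) / 2 ≤
      ∫ x, f x ∂(unif (upperHalf a b j)) - ∫ x, f x ∂(unif (lowerHalf a b j)) := by
  have hmon := monotoneOn_unitCube_of_update hmono
  set v : Fin s → ℝ := Pi.single j ((b j - a j) / 2)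
  have hpre := preimage_add_single_upperHalf a b j
  have hLsub := lowerHalf_subset a b j (hab j).le
  have hUsub := upperHalf_subset a b j (hab j).le
  have htrans := measurableEmbedding_addRight v
  have hmap : (unif (lowerHalf a b j)).map (· + v) = unif (upperHalf a b j) := by
    rw [unif, unif, ← hpre]
    exact map_add_right_cond_preimage volume v _
  have := isProbabilityMeasure_unif_lowerHalf a b j hab
  have hintL : Integrable f (unif (lowerHalf a b j)) :=
    (hmon.mono hsub).integrable_cond hf.aestronglyMeasurable measurableSet_Icc hLsub
  have hintU : Integrable (fun x ↦ f (x + v)) (unif (lowerHalf a b j)) := by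
    refine htrans.integrable_map_iff.1 (hmap ▸ ?_)
    exact (hmon.mono hsub).integrable_cond hf.aestronglyMeasurable measurableSet_Icc hUsub
  rw [← hmap, htrans.integral_map, ← integral_sub hintU hintL]
  calc α j * (b j - a j) / 2 = ∫ _, α j * ((b j - a j) / 2) ∂unif (lowerHalf a b j) := by
        simp [mul_div_assoc]
    _ ≤ _ := integral_mono_ae (integrable_const _) (hintU.sub hintL) <|
        ae_cond_of_forall_mem measurableSet_Icc fun x hx ↦
          mul_le_sub_of_add_single hmon hlow (by linarith [hab j]) (hsub (hLsub hx))
            (hsub (hUsub (hpre ▸ hx : x ∈ (· + v) ⁻¹' upperHalf a b j)))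

/-- if `f` is strictly increasing in each coordinate and
`|f(x) − f(y)| ≥ (∑ᵢ αᵢ²(xᵢ − yᵢ)²)^{1/2}` on `[0,1]^s`, then for a rectangle
`R = [a,b]` with positive side lengths, `E[f | R[j]⁺] − E[f | R[j]⁻] ≥ αⱼ μⱼ/2`.
(Measurability of `f` follows from coordinatewise monotonicity and is included as
an explicit hypothesis.) -/
theorem mean_gap_lower_bound {s : ℕ} (f : (Fin s → ℝ) → ℝ) (hf : Measurable f)
    (hmono : ∀ x ∈ unitCube s, ∀ (j : Fin s) (t u : ℝ), 0 ≤ t → t < u → u ≤ 1 →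
      f (Function.update x j t) < f (Function.update x j u))
    (α : Fin s → ℝ) (hα : ∀ i, 0 < α i)
    (hlow : ∀ x ∈ unitCube s, ∀ y ∈ unitCube s,
      Real.sqrt (∑ i, α i ^ 2 * (x i - y i) ^ 2) ≤ |f x - f y|)
    (a b : Fin s → ℝ) (hab : ∀ i, a i < b i)
    (hsub : Set.Icc a b ⊆ unitCube s) (j : Fin s) :
    α j * (b j - a j) / 2 ≤
      ∫ x, f x ∂(unif (upperHalf a b j)) - ∫ x, f x ∂(unif (lowerHalf a b j)) :=
  mean_gap_lower_bound_general f hf hmono α hlow a b hab hsub j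
end
end
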